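/- arXiv:2109.11765 — 2 statements merged into one kernel-verified Lean document; each statement's English description precedes it below -/
import Mathlib

section
/- Var[Y_i·Y_j] = p_i·p_j·K_ii·K_jj + K_ij²·(2·p_i·p_j − p_i²·p_j²). (Proposition 1, off-diagonal variance of the product of two partially observed jointly Gaussian coordinates.) -/
open MeasureTheory ProbabilityTheory Filter Finset Real
open scoped NNReal ENNReal

/-- The centered bivariate Gaussian law with covariance matrix `[[a, c], [c, b]]`,
characterized through the Cramér–Wold device: every linear functional pushes it
forward to the corresponding one-dimensional centered Gaussian law. -/
def IsCenteredGaussianPair (ν : Measure (ℝ × ℝ)) (a b c : ℝ) : Prop :=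
  IsProbabilityMeasure ν ∧
    ∀ t u : ℝ, ν.map (fun p => t * p.1 + u * p.2) =
      gaussianReal 0 (Real.toNNReal (t ^ 2 * a + 2 * t * u * c + u ^ 2 * b))



lemma myInt (n : ℕ) {b : ℝ} (hb : 0 < b) :
    Integrable (fun x : ℝ => x ^ n * Real.exp (-b * x ^ 2)) := by
  have h := integrable_rpow_mul_exp_neg_mul_sq hb (s := (n : ℝ))
    (lt_of_lt_of_le neg_one_lt_zero (Nat.cast_nonneg n))
  simpa [Real.rpow_natCast] using h

lemma myTendTop (n : ℕ) {b : ℝ} (hb : 0 < b) :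
    Tendsto (fun x : ℝ => x ^ n * Real.exp (-b * x ^ 2)) atTop (nhds 0) := by
  have h := rpow_mul_exp_neg_mul_sq_isLittleO_exp_neg hb (n : ℝ)
  have h2 : Tendsto (fun x : ℝ => Real.exp (-(1/2) * x)) atTop (nhds 0) := by
    apply Real.tendsto_exp_comp_nhds_zero.mpr
    apply Tendsto.const_mul_atTop_of_neg (by norm_num) tendsto_id |>.mono_right le_rfl
  have := h.isBigO.trans_tendsto h2
  simpa [Real.rpow_natCast] using this

lemma myTendBot (n : ℕ) {b : ℝ} (hb : 0 < b) :
    Tendsto (fun x : ℝ => x ^ n * Real.exp (-b * x ^ 2)) atBot (nhds 0) := by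
  have h := ((myTendTop n hb).const_mul ((-1:ℝ)^n)).comp tendsto_neg_atBot_atTop
  have he : ((fun x : ℝ => (-1:ℝ)^n * (x ^ n * Real.exp (-b * x ^ 2))) ∘ (fun x : ℝ => -x))
      = fun x : ℝ => x ^ n * Real.exp (-b * x ^ 2) := by
    funext x
    simp only [Function.comp_apply, ← mul_assoc, ← mul_pow, neg_mul_neg, one_mul, neg_sq]
  rw [he] at h
  simpa using h

lemma myRec (n : ℕ) {b : ℝ} (hb : 0 < b) :
    (2*b) * ∫ x : ℝ, x ^ (n+2) * Real.exp (-b * x ^ 2)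
      = (n+1 : ℝ) * ∫ x : ℝ, x ^ n * Real.exp (-b * x ^ 2) := by
  set F : ℝ → ℝ := fun x => x ^ (n+1) * Real.exp (-b * x ^ 2) with hF
  set G : ℝ → ℝ := fun x => (n+1 : ℝ) * (x ^ n * Real.exp (-b * x ^ 2))
      - (2*b) * (x ^ (n+2) * Real.exp (-b * x ^ 2)) with hG
  have hderiv : ∀ x : ℝ, HasDerivAt F (G x) x := by
    intro x
    have h1 : HasDerivAt (fun x : ℝ => x ^ (n+1)) ((n+1 : ℝ) * x ^ n) x := by
      simpa using hasDerivAt_pow (n+1) x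
    have h2 : HasDerivAt (fun x : ℝ => Real.exp (-b * x ^ 2))
        (Real.exp (-b * x ^ 2) * (-b * (2 * x))) x := by
      have hin : HasDerivAt (fun x : ℝ => -b * x ^ 2) (-b * (2 * x)) x := by
        simpa using (hasDerivAt_pow 2 x).const_mul (-b)
      exact hin.exp
    have := h1.mul h2
    refine this.congr_deriv ?_
    simp only [hG]
    ring
  have hGint : Integrable G := (((myInt n hb).const_mul _).sub ((myInt (n+2) hb).const_mul _))
  have hIoi : ∫ x in Set.Ioi (0:ℝ), G x = 0 - F 0 :=
    integral_Ioi_of_hasDerivAt_of_tendsto' (fun x _ => hderiv x) hGint.integrableOn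
      (myTendTop (n+1) hb)
  have hIic : ∫ x in Set.Iic (0:ℝ), G x = F 0 - 0 :=
    integral_Iic_of_hasDerivAt_of_tendsto' (fun x _ => hderiv x) hGint.integrableOn
      (myTendBot (n+1) hb)
  have hsplit : ∫ x, G x = 0 := by
    rw [← intervalIntegral.integral_Iic_add_Ioi hGint.integrableOn hGint.integrableOn, hIoi, hIic]
    ring
  have hexp : ∫ x, G x = (n+1 : ℝ) * (∫ x : ℝ, x ^ n * Real.exp (-b * x ^ 2))
      - (2*b) * ∫ x : ℝ, x ^ (n+2) * Real.exp (-b * x ^ 2) := by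
    rw [hG, integral_sub ((myInt n hb).const_mul _) ((myInt (n+2) hb).const_mul _),
      ← integral_const_mul, ← integral_const_mul]
  rw [hsplit] at hexp
  linarith

lemma gaussInt (v : ℝ≥0) (n : ℕ) : Integrable (fun x : ℝ => x ^ n) (gaussianReal 0 v) := by
  by_cases hv : v = 0
  · subst hv
    rw [gaussianReal_zero_var]
    refine ⟨(measurable_id.pow_const n).aestronglyMeasurable, ?_⟩
    simp [HasFiniteIntegral, lintegral_dirac]
  · have hb : 0 < (2 * (v:ℝ))⁻¹ := by positivity
    rw [gaussianReal_of_var_ne_zero _ hv]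
    have hpdfm : Measurable (fun x => Real.toNNReal (gaussianPDFReal 0 v x)) :=
      (measurable_gaussianPDFReal 0 v).real_toNNReal
    have : Measure.withDensity volume (gaussianPDF 0 v)
        = Measure.withDensity volume (fun x => (Real.toNNReal (gaussianPDFReal 0 v x) : ℝ≥0∞)) := rfl
    rw [this, integrable_withDensity_iff_integrable_smul hpdfm]
    have heq : (fun x : ℝ => (Real.toNNReal (gaussianPDFReal 0 v x)) • (x ^ n))
        = fun x : ℝ => (√(2*Real.pi*v))⁻¹ * (x ^ n * Real.exp (-(2*(v:ℝ))⁻¹ * x^2)) := by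
      funext x
      rw [NNReal.smul_def, smul_eq_mul, Real.coe_toNNReal _ (gaussianPDFReal_nonneg 0 v x),
        gaussianPDFReal]
      rw [show -(x-0)^2/(2*(v:ℝ)) = -(2*(v:ℝ))⁻¹ * x^2 by rw [div_eq_mul_inv]; ring]
      ring
    rw [heq]
    exact (myInt n hb).const_mul _

lemma gaussMomEq (v : ℝ≥0) (hv : v ≠ 0) (n : ℕ) :
    ∫ x, x ^ n ∂(gaussianReal 0 v)
      = (√(2*Real.pi*v))⁻¹ * ∫ x : ℝ, x ^ n * Real.exp (-(2*(v:ℝ))⁻¹ * x^2) := by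
  rw [gaussianReal_of_var_ne_zero _ hv]
  have hpdfm : Measurable (fun x => Real.toNNReal (gaussianPDFReal 0 v x)) :=
    (measurable_gaussianPDFReal 0 v).real_toNNReal
  have h1 : Measure.withDensity volume (gaussianPDF 0 v)
      = Measure.withDensity volume (fun x => (Real.toNNReal (gaussianPDFReal 0 v x) : ℝ≥0∞)) := rfl
  rw [h1, integral_withDensity_eq_integral_smul hpdfm]
  rw [← integral_const_mul]
  congr 1
  funext x
  rw [NNReal.smul_def, smul_eq_mul, Real.coe_toNNReal _ (gaussianPDFReal_nonneg 0 v x),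
    gaussianPDFReal]
  rw [show -(x-0)^2/(2*(v:ℝ)) = -(2*(v:ℝ))⁻¹ * x^2 by rw [div_eq_mul_inv]; ring]
  ring

lemma gaussNorm (v : ℝ≥0) (hv : v ≠ 0) :
    (√(2*Real.pi*v))⁻¹ * ∫ x : ℝ, x ^ 0 * Real.exp (-(2*(v:ℝ))⁻¹ * x^2) = 1 := by
  have := gaussMomEq v hv 0
  simp only [pow_zero] at this ⊢
  rw [← this]
  simp

lemma gaussAux (v : ℝ≥0) (hv : v ≠ 0) :
    (∫ x : ℝ, x ^ 2 * Real.exp (-(2*(v:ℝ))⁻¹ * x^2))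
      = (v:ℝ) * ∫ x : ℝ, x ^ 0 * Real.exp (-(2*(v:ℝ))⁻¹ * x^2) := by
  have hvpos : 0 < (v:ℝ) := by
    have : (0:ℝ≥0) < v := pos_iff_ne_zero.mpr hv
    exact_mod_cast this
  have hb : 0 < (2 * (v:ℝ))⁻¹ := by positivity
  have hrec := myRec 0 hb
  have h2b : 2 * (2 * (v:ℝ))⁻¹ = (v:ℝ)⁻¹ := by
    rw [mul_inv]; field_simp
  rw [h2b] at hrec
  simp only [Nat.cast_zero, zero_add, one_mul] at hrec
  calc (∫ x : ℝ, x ^ 2 * Real.exp (-(2*(v:ℝ))⁻¹ * x^2))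
      = (v:ℝ) * ((v:ℝ)⁻¹ * ∫ x : ℝ, x ^ 2 * Real.exp (-(2*(v:ℝ))⁻¹ * x^2)) := by
        rw [← mul_assoc, mul_inv_cancel₀ (ne_of_gt hvpos), one_mul]
    _ = (v:ℝ) * ∫ x : ℝ, x ^ 0 * Real.exp (-(2*(v:ℝ))⁻¹ * x^2) := by
        rw [hrec]

lemma gaussAux4 (v : ℝ≥0) (hv : v ≠ 0) :
    (∫ x : ℝ, x ^ 4 * Real.exp (-(2*(v:ℝ))⁻¹ * x^2))
      = 3 * (v:ℝ) * ∫ x : ℝ, x ^ 2 * Real.exp (-(2*(v:ℝ))⁻¹ * x^2) := by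
  have hvpos : 0 < (v:ℝ) := by
    have : (0:ℝ≥0) < v := pos_iff_ne_zero.mpr hv
    exact_mod_cast this
  have hb : 0 < (2 * (v:ℝ))⁻¹ := by positivity
  have hrec := myRec 2 hb
  have h2b : 2 * (2 * (v:ℝ))⁻¹ = (v:ℝ)⁻¹ := by
    rw [mul_inv]; field_simp
  rw [h2b] at hrec
  simp only [show (2:ℕ)+2 = 4 from rfl, Nat.cast_ofNat] at hrec
  have h3 : ((2:ℝ)+1) = 3 := by norm_num
  rw [h3] at hrec
  calc (∫ x : ℝ, x ^ 4 * Real.exp (-(2*(v:ℝ))⁻¹ * x^2))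
      = (v:ℝ) * ((v:ℝ)⁻¹ * ∫ x : ℝ, x ^ 4 * Real.exp (-(2*(v:ℝ))⁻¹ * x^2)) := by
        rw [← mul_assoc, mul_inv_cancel₀ (ne_of_gt hvpos), one_mul]
    _ = 3 * (v:ℝ) * ∫ x : ℝ, x ^ 2 * Real.exp (-(2*(v:ℝ))⁻¹ * x^2) := by
        rw [hrec]; ring

lemma gaussMom2 (v : ℝ≥0) : ∫ x, x ^ 2 ∂(gaussianReal 0 v) = v := by
  by_cases hv : v = 0
  · subst hv; simp [integral_dirac]
  · rw [gaussMomEq v hv 2, gaussAux v hv,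
      show (√(2*Real.pi*v))⁻¹ * ((v:ℝ) * ∫ x : ℝ, x ^ 0 * Real.exp (-(2*(v:ℝ))⁻¹ * x^2))
        = (v:ℝ) * ((√(2*Real.pi*v))⁻¹ * ∫ x : ℝ, x ^ 0 * Real.exp (-(2*(v:ℝ))⁻¹ * x^2)) by ring,
      gaussNorm v hv, mul_one]

lemma gaussMom4 (v : ℝ≥0) : ∫ x, x ^ 4 ∂(gaussianReal 0 v) = 3 * (v:ℝ)^2 := by
  by_cases hv : v = 0
  · subst hv; simp [integral_dirac]
  · rw [gaussMomEq v hv 4, gaussAux4 v hv, gaussAux v hv,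
      show (√(2*Real.pi*v))⁻¹ * (3 * (v:ℝ) * ((v:ℝ) * ∫ x : ℝ, x ^ 0 * Real.exp (-(2*(v:ℝ))⁻¹ * x^2)))
        = 3 * (v:ℝ)^2 * ((√(2*Real.pi*v))⁻¹ * ∫ x : ℝ, x ^ 0 * Real.exp (-(2*(v:ℝ))⁻¹ * x^2)) by ring,
      gaussNorm v hv, mul_one]

lemma pairStuff {ν : Measure (ℝ × ℝ)} {a b c : ℝ} (ha : 0 < a) (hb : 0 < b)
    (hpsd : c^2 ≤ a*b) (h : IsCenteredGaussianPair ν a b c) :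
    (Integrable (fun p : ℝ × ℝ => p.1 * p.2) ν ∧ ∫ p : ℝ × ℝ, p.1 * p.2 ∂ν = c) ∧
    (Integrable (fun p : ℝ × ℝ => (p.1 * p.2)^2) ν ∧
      ∫ p : ℝ × ℝ, (p.1*p.2)^2 ∂ν = a*b + 2*c^2) := by
  obtain ⟨hprob, hmap⟩ := h
  have key : ∀ t u : ℝ, ∀ n : ℕ,
      Integrable (fun p : ℝ × ℝ => (t*p.1+u*p.2)^n) ν ∧
      ∫ p : ℝ × ℝ, (t*p.1+u*p.2)^n ∂ν
        = ∫ x, x^n ∂(gaussianReal 0 (Real.toNNReal (t^2*a+2*t*u*c+u^2*b))) := by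
    intro t u n
    have hL : Measurable (fun p : ℝ × ℝ => t*p.1 + u*p.2) :=
      (measurable_fst.const_mul t).add (measurable_snd.const_mul u)
    have hint : Integrable (fun x : ℝ => x^n) (ν.map (fun p : ℝ × ℝ => t*p.1+u*p.2)) := by
      rw [hmap t u]; exact gaussInt _ n
    constructor
    · have := (integrable_map_measure (measurable_id.pow_const n).aestronglyMeasurable
        hL.aemeasurable).mp hint
      exact this
    · rw [← hmap t u]
      exact (integral_map hL.aemeasurable
        (measurable_id.pow_const n).aestronglyMeasurable).symm
  have hQnn : ∀ t u : ℝ, 0 ≤ t^2*a+2*t*u*c+u^2*b := by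
    intro t u
    nlinarith [sq_nonneg (t*c+u*b), mul_nonneg (sq_nonneg t) (sub_nonneg.mpr hpsd), hb,
      sq_nonneg (t*b), sq_nonneg u]
  have e2 : ∀ t u : ℝ, ∫ p : ℝ × ℝ, (t*p.1+u*p.2)^2 ∂ν = t^2*a+2*t*u*c+u^2*b := by
    intro t u
    rw [(key t u 2).2, gaussMom2, Real.coe_toNNReal _ (hQnn t u)]
  have e4 : ∀ t u : ℝ, ∫ p : ℝ × ℝ, (t*p.1+u*p.2)^4 ∂ν = 3*(t^2*a+2*t*u*c+u^2*b)^2 := by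
    intro t u
    rw [(key t u 4).2, gaussMom4, Real.coe_toNNReal _ (hQnn t u)]
  have iXY : Integrable (fun p : ℝ × ℝ => p.1 * p.2) ν := by
    refine Integrable.mono'
      (g := fun p : ℝ × ℝ => ((1:ℝ)*p.1+(0:ℝ)*p.2)^2/2 + ((0:ℝ)*p.1+(1:ℝ)*p.2)^2/2)
      (((key 1 0 2).1.div_const 2).add ((key 0 1 2).1.div_const 2))
      (measurable_fst.mul measurable_snd).aestronglyMeasurable
      (ae_of_all _ fun p => ?_)
    rw [Real.norm_eq_abs, abs_le]
    constructor <;> nlinarith [sq_nonneg (p.1+p.2), sq_nonneg (p.1-p.2)]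
  have iX2Y2 : Integrable (fun p : ℝ × ℝ => (p.1 * p.2)^2) ν := by
    refine Integrable.mono'
      (g := fun p : ℝ × ℝ => ((1:ℝ)*p.1+(0:ℝ)*p.2)^4/2 + ((0:ℝ)*p.1+(1:ℝ)*p.2)^4/2)
      (((key 1 0 4).1.div_const 2).add ((key 0 1 4).1.div_const 2))
      ((measurable_fst.mul measurable_snd).pow_const 2).aestronglyMeasurable
      (ae_of_all _ fun p => ?_)
    rw [Real.norm_eq_abs, abs_of_nonneg (sq_nonneg _)]
    nlinarith [sq_nonneg (p.1^2 - p.2^2), sq_nonneg (p.1*p.2)]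
  have eXY : ∫ p : ℝ × ℝ, p.1 * p.2 ∂ν = c := by
    have hfun : (fun p : ℝ × ℝ => p.1 * p.2)
        = fun p : ℝ × ℝ => (((1:ℝ)*p.1+(1:ℝ)*p.2)^2 - ((1:ℝ)*p.1+(0:ℝ)*p.2)^2
            - ((0:ℝ)*p.1+(1:ℝ)*p.2)^2)/2 := funext fun p => by ring
    have hsub1 : ∫ p : ℝ × ℝ, (((1:ℝ)*p.1+(1:ℝ)*p.2)^2 - ((1:ℝ)*p.1+(0:ℝ)*p.2)^2
          - ((0:ℝ)*p.1+(1:ℝ)*p.2)^2) ∂ν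
        = (∫ p : ℝ × ℝ, (((1:ℝ)*p.1+(1:ℝ)*p.2)^2 - ((1:ℝ)*p.1+(0:ℝ)*p.2)^2) ∂ν)
          - ∫ p : ℝ × ℝ, ((0:ℝ)*p.1+(1:ℝ)*p.2)^2 ∂ν :=
      integral_sub ((key 1 1 2).1.sub (key 1 0 2).1) (key 0 1 2).1
    have hsub2 : ∫ p : ℝ × ℝ, (((1:ℝ)*p.1+(1:ℝ)*p.2)^2 - ((1:ℝ)*p.1+(0:ℝ)*p.2)^2) ∂ν
        = (∫ p : ℝ × ℝ, ((1:ℝ)*p.1+(1:ℝ)*p.2)^2 ∂ν)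
          - ∫ p : ℝ × ℝ, ((1:ℝ)*p.1+(0:ℝ)*p.2)^2 ∂ν :=
      integral_sub (key 1 1 2).1 (key 1 0 2).1
    rw [hfun, integral_div, hsub1, hsub2, e2 1 1, e2 1 0, e2 0 1]
    ring
  have eX2Y2 : ∫ p : ℝ × ℝ, (p.1*p.2)^2 ∂ν = a*b + 2*c^2 := by
    have hfun : (fun p : ℝ × ℝ => (p.1 * p.2)^2)
        = fun p : ℝ × ℝ => (((1:ℝ)*p.1+(1:ℝ)*p.2)^4 + ((1:ℝ)*p.1+(-1:ℝ)*p.2)^4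
            - 2*((1:ℝ)*p.1+(0:ℝ)*p.2)^4 - 2*((0:ℝ)*p.1+(1:ℝ)*p.2)^4)/12 :=
      funext fun p => by ring
    have hsub1 : ∫ p : ℝ × ℝ, (((1:ℝ)*p.1+(1:ℝ)*p.2)^4 + ((1:ℝ)*p.1+(-1:ℝ)*p.2)^4
          - 2*((1:ℝ)*p.1+(0:ℝ)*p.2)^4 - 2*((0:ℝ)*p.1+(1:ℝ)*p.2)^4) ∂ν
        = (∫ p : ℝ × ℝ, (((1:ℝ)*p.1+(1:ℝ)*p.2)^4 + ((1:ℝ)*p.1+(-1:ℝ)*p.2)^4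
          - 2*((1:ℝ)*p.1+(0:ℝ)*p.2)^4) ∂ν) - ∫ p : ℝ × ℝ, 2*((0:ℝ)*p.1+(1:ℝ)*p.2)^4 ∂ν :=
      integral_sub (((key 1 1 4).1.add (key 1 (-1) 4).1).sub ((key 1 0 4).1.const_mul 2))
        ((key 0 1 4).1.const_mul 2)
    have hsub2 : ∫ p : ℝ × ℝ, (((1:ℝ)*p.1+(1:ℝ)*p.2)^4 + ((1:ℝ)*p.1+(-1:ℝ)*p.2)^4
          - 2*((1:ℝ)*p.1+(0:ℝ)*p.2)^4) ∂ν
        = (∫ p : ℝ × ℝ, (((1:ℝ)*p.1+(1:ℝ)*p.2)^4 + ((1:ℝ)*p.1+(-1:ℝ)*p.2)^4) ∂ν)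
          - ∫ p : ℝ × ℝ, 2*((1:ℝ)*p.1+(0:ℝ)*p.2)^4 ∂ν :=
      integral_sub ((key 1 1 4).1.add (key 1 (-1) 4).1) ((key 1 0 4).1.const_mul 2)
    have hadd : ∫ p : ℝ × ℝ, (((1:ℝ)*p.1+(1:ℝ)*p.2)^4 + ((1:ℝ)*p.1+(-1:ℝ)*p.2)^4) ∂ν
        = (∫ p : ℝ × ℝ, ((1:ℝ)*p.1+(1:ℝ)*p.2)^4 ∂ν)
          + ∫ p : ℝ × ℝ, ((1:ℝ)*p.1+(-1:ℝ)*p.2)^4 ∂ν :=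
      integral_add (key 1 1 4).1 (key 1 (-1) 4).1
    rw [hfun, integral_div, hsub1, hsub2, hadd, integral_const_mul, integral_const_mul,
      e4 1 1, e4 1 (-1), e4 1 0, e4 0 1]
    ring
  exact ⟨⟨iXY, eXY⟩, ⟨iX2Y2, eX2Y2⟩⟩

/-- Proposition 1 (off-diagonal variance):
`Var[Yᵢ Yⱼ] = pᵢ pⱼ K_ii K_jj + K_ij² (2 pᵢ pⱼ - pᵢ² pⱼ²)`. -/
theorem variance_product_partially_observed
    {Ω : Type*} [MeasurableSpace Ω] (μ : Measure Ω) [IsProbabilityMeasure μ]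
    (Kii Kjj Kij : ℝ) (hKii : 0 < Kii) (hKjj : 0 < Kjj) (hKpsd : Kij ^ 2 ≤ Kii * Kjj)
    (pi pj : ℝ) (hpi0 : 0 < pi) (hpi1 : pi ≤ 1) (hpj0 : 0 < pj) (hpj1 : pj ≤ 1)
    (Yt : Ω → ℝ × ℝ) (hYt : Measurable Yt)
    (hYtlaw : IsCenteredGaussianPair (μ.map Yt) Kii Kjj Kij)
    (Hi Hj : Ω → ℝ) (hHi : Measurable Hi) (hHj : Measurable Hj)
    (hHi01 : ∀ ω, Hi ω = 0 ∨ Hi ω = 1) (hHj01 : ∀ ω, Hj ω = 0 ∨ Hj ω = 1)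
    (hHiP : μ {ω | Hi ω = 1} = ENNReal.ofReal pi)
    (hHjP : μ {ω | Hj ω = 1} = ENNReal.ofReal pj)
    (hindep : μ.map (fun ω => (Hi ω, Hj ω, Yt ω)) =
      (μ.map Hi).prod ((μ.map Hj).prod (μ.map Yt)))
    (Yi Yj : Ω → ℝ)
    (hYi : Yi = fun ω => Hi ω * (Yt ω).1) (hYj : Yj = fun ω => Hj ω * (Yt ω).2) :
    ∫ ω, (Yi ω * Yj ω) ^ 2 ∂μ - (∫ ω, Yi ω * Yj ω ∂μ) ^ 2 =
      pi * pj * Kii * Kjj + Kij ^ 2 * (2 * pi * pj - pi ^ 2 * pj ^ 2) := by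
  obtain ⟨⟨iXY, eXY⟩, iX2Y2, eX2Y2⟩ := pairStuff hKii hKjj hKpsd hYtlaw
  -- integrals of the Bernoulli variables
  have hBer : ∀ (H : Ω → ℝ), Measurable H → (∀ ω, H ω = 0 ∨ H ω = 1) →
      ∀ (q : ℝ), 0 ≤ q → μ {ω | H ω = 1} = ENNReal.ofReal q → ∫ ω, H ω ∂μ = q := by
    intro H hH h01 q hq hP
    have hset : MeasurableSet {ω | H ω = 1} := hH (measurableSet_singleton 1)
    have hind : H = Set.indicator {ω | H ω = 1} (fun _ => (1:ℝ)) := by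
      funext ω
      rcases h01 ω with h | h <;>
        simp [Set.indicator_apply, Set.mem_setOf_eq, h]
    rw [hind, integral_indicator hset, setIntegral_const, smul_eq_mul, mul_one, measureReal_def, hP,
      ENNReal.toReal_ofReal hq]
  have hHiInt : ∫ ω, Hi ω ∂μ = pi := hBer Hi hHi hHi01 pi hpi0.le hHiP
  have hHjInt : ∫ ω, Hj ω ∂μ = pj := hBer Hj hHj hHj01 pj hpj0.le hHjP
  -- factorization
  have hT : Measurable (fun ω => (Hi ω, Hj ω, Yt ω)) := hHi.prodMk (hHj.prodMk hYt)
  have key : ∀ g : ℝ × ℝ → ℝ, Measurable g →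
      ∫ ω, Hi ω * (Hj ω * g (Yt ω)) ∂μ = pi * (pj * ∫ p, g p ∂(μ.map Yt)) := by
    intro g hg
    have hF : Measurable (fun z : ℝ × ℝ × (ℝ × ℝ) => z.1 * (z.2.1 * g z.2.2)) :=
      measurable_fst.mul ((measurable_fst.comp measurable_snd).mul
        (hg.comp (measurable_snd.comp measurable_snd)))
    have h1 : ∫ ω, Hi ω * (Hj ω * g (Yt ω)) ∂μ
        = ∫ z : ℝ × ℝ × (ℝ × ℝ), z.1 * (z.2.1 * g z.2.2)
            ∂(μ.map (fun ω => (Hi ω, Hj ω, Yt ω))) :=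
      (integral_map hT.aemeasurable hF.aestronglyMeasurable).symm
    have h2 : ∫ z : ℝ × ℝ × (ℝ × ℝ), z.1 * (z.2.1 * g z.2.2)
          ∂((μ.map Hi).prod ((μ.map Hj).prod (μ.map Yt)))
        = (∫ x, x ∂(μ.map Hi)) * ∫ w : ℝ × (ℝ × ℝ), w.1 * g w.2
            ∂((μ.map Hj).prod (μ.map Yt)) :=
      integral_prod_mul (fun x : ℝ => x) (fun w : ℝ × (ℝ × ℝ) => w.1 * g w.2)
    have h3 : ∫ w : ℝ × (ℝ × ℝ), w.1 * g w.2 ∂((μ.map Hj).prod (μ.map Yt))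
        = (∫ x, x ∂(μ.map Hj)) * ∫ p, g p ∂(μ.map Yt) :=
      integral_prod_mul (fun x : ℝ => x) (fun p : ℝ × ℝ => g p)
    have h4 : ∫ x, x ∂(μ.map Hi) = pi := by
      have h4' : ∫ x, x ∂(μ.map Hi) = ∫ ω, Hi ω ∂μ :=
        integral_map hHi.aemeasurable measurable_id.aestronglyMeasurable
      rw [h4', hHiInt]
    have h5 : ∫ x, x ∂(μ.map Hj) = pj := by
      have h5' : ∫ x, x ∂(μ.map Hj) = ∫ ω, Hj ω ∂μ :=
        integral_map hHj.aemeasurable measurable_id.aestronglyMeasurable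
      rw [h5', hHjInt]
    rw [h1, hindep, h2, h3, h4, h5]
  -- first moment
  have hHi2 : ∀ ω, Hi ω * Hi ω = Hi ω := fun ω => by rcases hHi01 ω with h | h <;> simp [h]
  have hHj2 : ∀ ω, Hj ω * Hj ω = Hj ω := fun ω => by rcases hHj01 ω with h | h <;> simp [h]
  have E1 : ∫ ω, Yi ω * Yj ω ∂μ = pi * (pj * Kij) := by
    have hfun : (fun ω => Yi ω * Yj ω)
        = fun ω => Hi ω * (Hj ω * ((Yt ω).1 * (Yt ω).2)) := by
      funext ω; rw [hYi, hYj]; ring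
    rw [hfun, key (fun p => p.1 * p.2) (measurable_fst.mul measurable_snd), eXY]
  have E2 : ∫ ω, (Yi ω * Yj ω) ^ 2 ∂μ = pi * (pj * (Kii*Kjj + 2*Kij^2)) := by
    have hfun : (fun ω => (Yi ω * Yj ω) ^ 2)
        = fun ω => Hi ω * (Hj ω * (((Yt ω).1 * (Yt ω).2)) ^ 2) := by
      funext ω
      rw [hYi, hYj]
      have : (Hi ω * (Yt ω).1 * (Hj ω * (Yt ω).2)) ^ 2
          = (Hi ω * Hi ω) * ((Hj ω * Hj ω) * ((Yt ω).1 * (Yt ω).2) ^ 2) := by ring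
      rw [this, hHi2, hHj2]
    rw [hfun, key (fun p => (p.1 * p.2) ^ 2)
      ((measurable_fst.mul measurable_snd).pow_const 2), eX2Y2]
  rw [E1, E2]
  ring
end

section
/- Var[G̃_ij] ≤ K_ii·K_jj / (D·p̄_ij) + (K_ij²/D)·(2/p̄_ij − 1), where p̄_ij = (1/D)·Σ_{s=1}^D p_{is}·p_{js}. (Proposition 2, upper bound on the variance of the bias-corrected off-diagonal Gram entry.) -/
open MeasureTheory ProbabilityTheory Filter Finset

/-- Codomain family for the joint family of the two indicator families (real-valued)
and the family of Gaussian pairs. -/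
abbrev mixedCod (α β γ : Type*) : α ⊕ β ⊕ γ → Type _ :=
  Sum.elim (fun _ => ℝ) (Sum.elim (fun _ => ℝ) fun _ => ℝ × ℝ)

/-- The measurable-space structures on the codomains. -/
def mixedMS {α β γ : Type*} : ∀ x : α ⊕ β ⊕ γ, MeasurableSpace (mixedCod α β γ x)
  | Sum.inl _ => (inferInstance : MeasurableSpace ℝ)
  | Sum.inr (Sum.inl _) => (inferInstance : MeasurableSpace ℝ)
  | Sum.inr (Sum.inr _) => (inferInstance : MeasurableSpace (ℝ × ℝ))

/-- The joint family made of the two indicator families and the Gaussian-pair family. -/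
def mixedFam {Ω : Type*} {α β γ : Type*} (f : α → Ω → ℝ) (g : β → Ω → ℝ)
    (h : γ → Ω → ℝ × ℝ) : ∀ x : α ⊕ β ⊕ γ, Ω → mixedCod α β γ x
  | Sum.inl s => f s
  | Sum.inr (Sum.inl s) => g s
  | Sum.inr (Sum.inr s) => h s

open Real
open scoped ENNReal NNReal



section GaussMoments

lemma integrableOn_pow_mul_exp_neg_mul_sq' {b : ℝ} (hb : 0 < b) (n : ℕ) :
    IntegrableOn (fun x : ℝ => x ^ n * Real.exp (-b * x ^ 2)) (Set.Ioi 0) := by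
  have h := integrableOn_rpow_mul_exp_neg_mul_sq hb (s := (n : ℝ))
    (lt_of_lt_of_le neg_one_lt_zero (Nat.cast_nonneg n))
  refine h.congr_fun (fun x hx => ?_) measurableSet_Ioi
  simp only [Real.rpow_natCast]

lemma integrable_comp_abs' {g : ℝ → ℝ} (hg : Measurable g)
    (h : IntegrableOn g (Set.Ioi 0)) : Integrable (fun x => g |x|) := by
  have int_Ioi : IntegrableOn (fun x => g |x|) (Set.Ioi 0) := by
    refine h.congr_fun (fun x hx => ?_) measurableSet_Ioi
    rw [abs_of_pos hx]
  have int_Iic : IntegrableOn (fun x ↦ g |x|) (Set.Iic 0) := by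
    rw [← Measure.map_neg_eq_self (volume : Measure ℝ)]
    have m : MeasurableEmbedding fun x : ℝ => -x := (Homeomorph.neg ℝ).measurableEmbedding
    rw [m.integrableOn_map_iff]
    simp_rw [Function.comp_def, abs_neg, Set.neg_preimage, Set.neg_Iic, neg_zero]
    exact Iff.mpr integrableOn_Ici_iff_integrableOn_Ioi int_Ioi
  have hu : IntegrableOn (fun x => g |x|) (Set.Iic 0 ∪ Set.Ioi 0) := int_Iic.union int_Ioi
  rw [Set.Iic_union_Ioi] at hu
  exact integrableOn_univ.mp hu

lemma integrable_even_pow_mul_exp_neg_mul_sq {b : ℝ} (hb : 0 < b) (k : ℕ) :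
    Integrable (fun x : ℝ => x ^ (2 * k) * Real.exp (-b * x ^ 2)) := by
  have heq : (fun x : ℝ => x ^ (2 * k) * Real.exp (-b * x ^ 2))
      = fun x => |x| ^ (2 * k) * Real.exp (-b * |x| ^ 2) := by
    funext x
    rw [pow_mul, pow_mul, sq_abs]
  rw [heq]
  exact integrable_comp_abs' (by measurability) (integrableOn_pow_mul_exp_neg_mul_sq' hb _)

lemma integral_even_pow_mul_exp_neg_mul_sq {b : ℝ} (hb : 0 < b) (k : ℕ) :
    ∫ x : ℝ, x ^ (2 * k) * Real.exp (-b * x ^ 2)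
      = b ^ (-(2 * (k : ℝ) + 1) / 2) * Real.Gamma ((2 * (k : ℝ) + 1) / 2) := by
  have heq : (fun x : ℝ => x ^ (2 * k) * Real.exp (-b * x ^ 2))
      = fun x => |x| ^ (2 * k) * Real.exp (-b * |x| ^ 2) := by
    funext x; rw [pow_mul, pow_mul, sq_abs]
  rw [heq]
  rw [integral_comp_abs (f := fun x => x ^ (2 * k) * Real.exp (-b * x ^ 2))]
  have h := integral_rpow_mul_exp_neg_mul_rpow (p := 2) (q := (2 * (k : ℝ))) (b := b)
    zero_lt_two (by have : (0:ℝ) ≤ (k:ℝ) := Nat.cast_nonneg k; linarith) hb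
  have h2 : ∫ x in Set.Ioi (0:ℝ), x ^ (2 * k) * Real.exp (-b * x ^ 2)
      = ∫ x in Set.Ioi (0:ℝ), x ^ (2 * (k : ℝ)) * Real.exp (-b * x ^ (2:ℝ)) := by
    refine setIntegral_congr_fun measurableSet_Ioi (fun x hx => ?_)
    rw [show (2 * (k:ℝ)) = ((2 * k : ℕ) : ℝ) by push_cast; ring, Real.rpow_natCast,
      show (2:ℝ) = ((2:ℕ) : ℝ) by norm_num, Real.rpow_natCast]
  rw [h2, h]
  ring

end GaussMoments



section GaussRealMoments

lemma gaussianPDF_eq_coe_toNNReal (μ : ℝ) (v : ℝ≥0) :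
    gaussianPDF μ v = fun x => ((Real.toNNReal (gaussianPDFReal μ v x) : ℝ≥0) : ℝ≥0∞) := rfl

lemma integral_gaussianReal_eq {v : ℝ≥0} (hv : v ≠ 0) (g : ℝ → ℝ) :
    ∫ x, g x ∂(gaussianReal 0 v) = ∫ x, gaussianPDFReal 0 v x * g x := by
  rw [gaussianReal_of_var_ne_zero _ hv, gaussianPDF_eq_coe_toNNReal,
    integral_withDensity_eq_integral_smul
      ((measurable_gaussianPDFReal 0 v).real_toNNReal) g]
  congr 1
  funext x
  rw [NNReal.smul_def, Real.coe_toNNReal _ (gaussianPDFReal_nonneg 0 v x), smul_eq_mul]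

lemma integrable_gaussianReal_iff {v : ℝ≥0} (hv : v ≠ 0) (g : ℝ → ℝ) :
    Integrable g (gaussianReal 0 v) ↔
      Integrable (fun x => gaussianPDFReal 0 v x * g x) volume := by
  rw [gaussianReal_of_var_ne_zero _ hv, gaussianPDF_eq_coe_toNNReal,
    integrable_withDensity_iff_integrable_smul
      ((measurable_gaussianPDFReal 0 v).real_toNNReal)]
  constructor <;> intro h <;> refine h.congr (Filter.Eventually.of_forall fun x => ?_) <;>
    simp only [NNReal.smul_def, smul_eq_mul,
      Real.coe_toNNReal _ (gaussianPDFReal_nonneg 0 v x)]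

lemma integrable_even_pow_gaussianReal (v : ℝ≥0) (k : ℕ) :
    Integrable (fun x : ℝ => x ^ (2 * k)) (gaussianReal 0 v) := by
  by_cases hv : v = 0
  · subst hv
    rw [gaussianReal_zero_var]
    refine ⟨(measurable_id.pow_const _).aestronglyMeasurable, ?_⟩
    rw [HasFiniteIntegral, lintegral_dirac]
    exact ENNReal.coe_lt_top
  · rw [integrable_gaussianReal_iff hv]
    have hvpos : (0:ℝ) < (v:ℝ) := by positivity
    have hb : (0:ℝ) < (2 * (v:ℝ))⁻¹ := by positivity
    have := (integrable_even_pow_mul_exp_neg_mul_sq hb k).const_mul ((Real.sqrt (2 * Real.pi * v))⁻¹)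
    refine this.congr (Filter.Eventually.of_forall fun x => ?_)
    rw [gaussianPDFReal_def]
    simp only [sub_zero]
    rw [show -(2*(v:ℝ))⁻¹ * x^2 = -x^2/(2*(v:ℝ)) from by ring]
    ring

end GaussRealMoments

lemma integral_even_pow_gaussianReal {v : ℝ≥0} (hv : v ≠ 0) (k : ℕ) :
    ∫ x, x ^ (2 * k) ∂(gaussianReal 0 v) =
      (Real.sqrt (2 * Real.pi * v))⁻¹ * ((2 * (v:ℝ)) ^ ((2 * (k:ℝ) + 1) / 2)
        * Real.Gamma ((2 * (k:ℝ) + 1) / 2)) := by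
  have hvpos : (0:ℝ) < (v:ℝ) := by positivity
  have hb : (0:ℝ) < (2 * (v:ℝ))⁻¹ := by positivity
  rw [integral_gaussianReal_eq hv]
  have heq : (fun x : ℝ => gaussianPDFReal 0 v x * x ^ (2 * k))
      = fun x => (Real.sqrt (2 * Real.pi * v))⁻¹
          * (x ^ (2 * k) * Real.exp (-(2 * (v:ℝ))⁻¹ * x ^ 2)) := by
    funext x
    rw [gaussianPDFReal_def]
    simp only [sub_zero]
    rw [show -(2*(v:ℝ))⁻¹ * x^2 = -x^2/(2*(v:ℝ)) from by ring]
    ring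
  rw [heq, integral_const_mul, integral_even_pow_mul_exp_neg_mul_sq hb k]
  rw [Real.inv_rpow (by positivity), ← Real.rpow_neg (by positivity), neg_div, neg_neg]

lemma integral_pow_two_gaussianReal (v : ℝ≥0) :
    ∫ x, x ^ 2 ∂(gaussianReal 0 v) = (v : ℝ) := by
  by_cases hv : v = 0
  · subst hv; rw [gaussianReal_zero_var, integral_dirac]; norm_num
  · have h := integral_even_pow_gaussianReal hv 1
    norm_num at h
    have hvpos : (0:ℝ) < (v:ℝ) := by positivity
    rw [h]
    rw [show (3:ℝ)/2 = 1/2 + 1 by norm_num, Real.Gamma_add_one (by norm_num),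
      Real.Gamma_one_half_eq]
    rw [Real.rpow_add (by positivity), Real.rpow_one, ← Real.sqrt_eq_rpow,
      Real.sqrt_mul (by norm_num : (0:ℝ) ≤ 2)]
    have h1 : Real.sqrt (v:ℝ) ≠ 0 := by positivity
    have h2 : Real.sqrt Real.pi ≠ 0 := by positivity
    have h3 : Real.sqrt 2 ≠ 0 := by positivity
    field_simp

lemma integral_pow_four_gaussianReal (v : ℝ≥0) :
    ∫ x, x ^ 4 ∂(gaussianReal 0 v) = 3 * (v : ℝ) ^ 2 := by
  by_cases hv : v = 0
  · subst hv; rw [gaussianReal_zero_var, integral_dirac]; norm_num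
  · have h := integral_even_pow_gaussianReal hv 2
    norm_num at h
    have hvpos : (0:ℝ) < (v:ℝ) := by positivity
    rw [h]
    rw [show (5:ℝ)/2 = 3/2 + 1 by norm_num, Real.Gamma_add_one (by norm_num),
      show (3:ℝ)/2 = 1/2 + 1 by norm_num, Real.Gamma_add_one (by norm_num),
      Real.Gamma_one_half_eq]
    rw [Real.rpow_add (by positivity), Real.rpow_add (by positivity), Real.rpow_one,
      ← Real.sqrt_eq_rpow, Real.sqrt_mul (by norm_num : (0:ℝ) ≤ 2)]
    have h1 : Real.sqrt (v:ℝ) ≠ 0 := by positivity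
    have h2 : Real.sqrt Real.pi ≠ 0 := by positivity
    have h3 : Real.sqrt 2 ≠ 0 := by positivity
    field_simp
    ring

section PairMoments
set_option maxHeartbeats 1000000

variable {ν : Measure (ℝ × ℝ)} {a b c : ℝ}

lemma IsCenteredGaussianPair.key (h : IsCenteredGaussianPair ν a b c) (t u : ℝ)
    (hq : 0 ≤ t ^ 2 * a + 2 * t * u * c + u ^ 2 * b) :
    Integrable (fun p : ℝ × ℝ => (t * p.1 + u * p.2) ^ 2) ν ∧
    Integrable (fun p : ℝ × ℝ => (t * p.1 + u * p.2) ^ 4) ν ∧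
    (∫ p, (t * p.1 + u * p.2) ^ 2 ∂ν) = t ^ 2 * a + 2 * t * u * c + u ^ 2 * b ∧
    (∫ p, (t * p.1 + u * p.2) ^ 4 ∂ν) = 3 * (t ^ 2 * a + 2 * t * u * c + u ^ 2 * b) ^ 2 := by
  have hL : Measurable (fun p : ℝ × ℝ => t * p.1 + u * p.2) :=
    (measurable_fst.const_mul t).add (measurable_snd.const_mul u)
  have hmap := h.2 t u
  have hsm2 : AEStronglyMeasurable (fun x : ℝ => x ^ 2)
      (ν.map (fun p : ℝ × ℝ => t * p.1 + u * p.2)) :=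
    (measurable_id.pow_const 2).aestronglyMeasurable
  have hsm4 : AEStronglyMeasurable (fun x : ℝ => x ^ 4)
      (ν.map (fun p : ℝ × ℝ => t * p.1 + u * p.2)) :=
    (measurable_id.pow_const 4).aestronglyMeasurable
  have hint2 : Integrable (fun x : ℝ => x ^ 2)
      (ν.map (fun p : ℝ × ℝ => t * p.1 + u * p.2)) := by
    rw [hmap]; simpa using integrable_even_pow_gaussianReal _ 1
  have hint4 : Integrable (fun x : ℝ => x ^ 4)
      (ν.map (fun p : ℝ × ℝ => t * p.1 + u * p.2)) := by
    rw [hmap]; simpa using integrable_even_pow_gaussianReal _ 2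
  have hi2 : Integrable (fun p : ℝ × ℝ => (t * p.1 + u * p.2) ^ 2) ν :=
    (integrable_map_measure hsm2 hL.aemeasurable).mp hint2
  have hi4 : Integrable (fun p : ℝ × ℝ => (t * p.1 + u * p.2) ^ 4) ν :=
    (integrable_map_measure hsm4 hL.aemeasurable).mp hint4
  have he2 : (∫ p, (t * p.1 + u * p.2) ^ 2 ∂ν) = t ^ 2 * a + 2 * t * u * c + u ^ 2 * b := by
    have h2 : ∫ y, y ^ 2 ∂(ν.map (fun p : ℝ × ℝ => t * p.1 + u * p.2))
        = ((Real.toNNReal (t ^ 2 * a + 2 * t * u * c + u ^ 2 * b) : ℝ≥0) : ℝ) := by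
      rw [hmap]; exact integral_pow_two_gaussianReal _
    rw [integral_map hL.aemeasurable hsm2, Real.coe_toNNReal _ hq] at h2
    exact h2
  have he4 : (∫ p, (t * p.1 + u * p.2) ^ 4 ∂ν)
      = 3 * (t ^ 2 * a + 2 * t * u * c + u ^ 2 * b) ^ 2 := by
    have h4 : ∫ y, y ^ 4 ∂(ν.map (fun p : ℝ × ℝ => t * p.1 + u * p.2))
        = 3 * ((Real.toNNReal (t ^ 2 * a + 2 * t * u * c + u ^ 2 * b) : ℝ≥0) : ℝ) ^ 2 := by
      rw [hmap]; exact integral_pow_four_gaussianReal _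
    rw [integral_map hL.aemeasurable hsm4, Real.coe_toNNReal _ hq] at h4
    exact h4
  exact ⟨hi2, hi4, he2, he4⟩

lemma IsCenteredGaussianPair.moments (h : IsCenteredGaussianPair ν a b c)
    (ha : 0 ≤ a) (hb : 0 ≤ b) (hc : c ^ 2 ≤ a * b) :
    Integrable (fun p : ℝ × ℝ => p.1 * p.2) ν ∧
    Integrable (fun p : ℝ × ℝ => (p.1 * p.2) ^ 2) ν ∧
    (∫ p, p.1 * p.2 ∂ν) = c ∧
    (∫ p, (p.1 * p.2) ^ 2 ∂ν) = a * b + 2 * c ^ 2 := by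
  have hqX : (0:ℝ) ≤ 1 ^ 2 * a + 2 * 1 * 0 * c + 0 ^ 2 * b := by nlinarith
  have hqY : (0:ℝ) ≤ 0 ^ 2 * a + 2 * 0 * 1 * c + 1 ^ 2 * b := by nlinarith
  have hqP : (0:ℝ) ≤ 1 ^ 2 * a + 2 * 1 * 1 * c + 1 ^ 2 * b := by nlinarith [sq_nonneg (a - b)]
  have hqM : (0:ℝ) ≤ 1 ^ 2 * a + 2 * 1 * (-1) * c + (-1) ^ 2 * b := by nlinarith [sq_nonneg (a - b)]
  have kX := h.key 1 0 hqX
  have kY := h.key 0 1 hqY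
  have kP := h.key 1 1 hqP
  have kM := h.key 1 (-1) hqM
  -- second moments
  have eX2 : (∫ p, ((p : ℝ × ℝ).1) ^ 2 ∂ν) = a := by
    rw [show (fun p : ℝ × ℝ => p.1 ^ 2) = fun p : ℝ × ℝ => (1 * p.1 + 0 * p.2) ^ 2 by
      funext p; ring, kX.2.2.1]; ring
  have eY2 : (∫ p, ((p : ℝ × ℝ).2) ^ 2 ∂ν) = b := by
    rw [show (fun p : ℝ × ℝ => p.2 ^ 2) = fun p : ℝ × ℝ => (0 * p.1 + 1 * p.2) ^ 2 by
      funext p; ring, kY.2.2.1]; ring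
  have eP2 : (∫ p, ((p : ℝ × ℝ).1 + p.2) ^ 2 ∂ν) = a + 2 * c + b := by
    rw [show (fun p : ℝ × ℝ => (p.1 + p.2) ^ 2) = fun p : ℝ × ℝ => (1 * p.1 + 1 * p.2) ^ 2 by
      funext p; ring, kP.2.2.1]; ring
  have iX2 : Integrable (fun p : ℝ × ℝ => p.1 ^ 2) ν := by
    rw [show (fun p : ℝ × ℝ => p.1 ^ 2) = fun p : ℝ × ℝ => (1 * p.1 + 0 * p.2) ^ 2 by
      funext p; ring]; exact kX.1
  have iY2 : Integrable (fun p : ℝ × ℝ => p.2 ^ 2) ν := by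
    rw [show (fun p : ℝ × ℝ => p.2 ^ 2) = fun p : ℝ × ℝ => (0 * p.1 + 1 * p.2) ^ 2 by
      funext p; ring]; exact kY.1
  have iP2 : Integrable (fun p : ℝ × ℝ => (p.1 + p.2) ^ 2) ν := by
    rw [show (fun p : ℝ × ℝ => (p.1 + p.2) ^ 2) = fun p : ℝ × ℝ => (1 * p.1 + 1 * p.2) ^ 2 by
      funext p; ring]; exact kP.1
  -- fourth moments
  have eX4 : (∫ p, ((p : ℝ × ℝ).1) ^ 4 ∂ν) = 3 * a ^ 2 := by
    rw [show (fun p : ℝ × ℝ => p.1 ^ 4) = fun p : ℝ × ℝ => (1 * p.1 + 0 * p.2) ^ 4 by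
      funext p; ring, kX.2.2.2]; ring
  have eY4 : (∫ p, ((p : ℝ × ℝ).2) ^ 4 ∂ν) = 3 * b ^ 2 := by
    rw [show (fun p : ℝ × ℝ => p.2 ^ 4) = fun p : ℝ × ℝ => (0 * p.1 + 1 * p.2) ^ 4 by
      funext p; ring, kY.2.2.2]; ring
  have eP4 : (∫ p, ((p : ℝ × ℝ).1 + p.2) ^ 4 ∂ν) = 3 * (a + 2 * c + b) ^ 2 := by
    rw [show (fun p : ℝ × ℝ => (p.1 + p.2) ^ 4) = fun p : ℝ × ℝ => (1 * p.1 + 1 * p.2) ^ 4 by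
      funext p; ring, kP.2.2.2]; ring
  have eM4 : (∫ p, ((p : ℝ × ℝ).1 - p.2) ^ 4 ∂ν) = 3 * (a - 2 * c + b) ^ 2 := by
    rw [show (fun p : ℝ × ℝ => (p.1 - p.2) ^ 4) = fun p : ℝ × ℝ => (1 * p.1 + (-1) * p.2) ^ 4 by
      funext p; ring, kM.2.2.2]; ring
  have iX4 : Integrable (fun p : ℝ × ℝ => p.1 ^ 4) ν := by
    rw [show (fun p : ℝ × ℝ => p.1 ^ 4) = fun p : ℝ × ℝ => (1 * p.1 + 0 * p.2) ^ 4 by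
      funext p; ring]; exact kX.2.1
  have iY4 : Integrable (fun p : ℝ × ℝ => p.2 ^ 4) ν := by
    rw [show (fun p : ℝ × ℝ => p.2 ^ 4) = fun p : ℝ × ℝ => (0 * p.1 + 1 * p.2) ^ 4 by
      funext p; ring]; exact kY.2.1
  have iP4 : Integrable (fun p : ℝ × ℝ => (p.1 + p.2) ^ 4) ν := by
    rw [show (fun p : ℝ × ℝ => (p.1 + p.2) ^ 4) = fun p : ℝ × ℝ => (1 * p.1 + 1 * p.2) ^ 4 by
      funext p; ring]; exact kP.2.1
  have iM4 : Integrable (fun p : ℝ × ℝ => (p.1 - p.2) ^ 4) ν := by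
    rw [show (fun p : ℝ × ℝ => (p.1 - p.2) ^ 4) = fun p : ℝ × ℝ => (1 * p.1 + (-1) * p.2) ^ 4 by
      funext p; ring]; exact kM.2.1
  -- measurability
  have hmXY : Measurable (fun p : ℝ × ℝ => p.1 * p.2) := measurable_fst.mul measurable_snd
  -- integrability of the product
  have iXY : Integrable (fun p : ℝ × ℝ => p.1 * p.2) ν := by
    refine (iX2.add iY2).mono' hmXY.aestronglyMeasurable
      (Filter.Eventually.of_forall fun p => ?_)
    simp only [Pi.add_apply, Real.norm_eq_abs]
    rw [abs_mul]
    nlinarith [sq_nonneg (|p.1| - |p.2|), sq_abs p.1, sq_abs p.2]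
  have iX2Y2 : Integrable (fun p : ℝ × ℝ => (p.1 * p.2) ^ 2) ν := by
    refine (iX4.add iY4).mono' ((hmXY.pow_const 2)).aestronglyMeasurable
      (Filter.Eventually.of_forall fun p => ?_)
    simp only [Pi.add_apply, Real.norm_eq_abs]
    rw [abs_of_nonneg (sq_nonneg _)]
    nlinarith [sq_nonneg (p.1 ^ 2 - p.2 ^ 2), sq_nonneg p.1, sq_nonneg p.2]
  -- values
  have eXY : (∫ p, (p : ℝ × ℝ).1 * p.2 ∂ν) = c := by
    rw [show (fun p : ℝ × ℝ => p.1 * p.2)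
        = fun p : ℝ × ℝ => ((p.1 + p.2) ^ 2 - p.1 ^ 2 - p.2 ^ 2) / 2 by funext p; ring]
    have iA : Integrable (fun p : ℝ × ℝ => (p.1 + p.2) ^ 2 - p.1 ^ 2) ν := iP2.sub iX2
    rw [integral_div, integral_sub iA iY2, integral_sub iP2 iX2, eP2, eX2, eY2]
    ring
  have eX2Y2 : (∫ p, ((p : ℝ × ℝ).1 * p.2) ^ 2 ∂ν) = a * b + 2 * c ^ 2 := by
    rw [show (fun p : ℝ × ℝ => (p.1 * p.2) ^ 2)
        = fun p : ℝ × ℝ =>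
            ((p.1 + p.2) ^ 4 + (p.1 - p.2) ^ 4 - 2 * p.1 ^ 4 - 2 * p.2 ^ 4) / 12 by
      funext p; ring]
    have iB : Integrable (fun p : ℝ × ℝ => (p.1 + p.2) ^ 4 + (p.1 - p.2) ^ 4) ν := iP4.add iM4
    have i2X4 : Integrable (fun p : ℝ × ℝ => 2 * p.1 ^ 4) ν := iX4.const_mul 2
    have i2Y4 : Integrable (fun p : ℝ × ℝ => 2 * p.2 ^ 4) ν := iY4.const_mul 2
    have iC : Integrable (fun p : ℝ × ℝ => (p.1 + p.2) ^ 4 + (p.1 - p.2) ^ 4 - 2 * p.1 ^ 4) ν :=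
      iB.sub i2X4
    rw [integral_div, integral_sub iC i2Y4, integral_sub iB i2X4, integral_add iP4 iM4,
      integral_const_mul, integral_const_mul, eP4, eM4, eX4, eY4]
    ring
  exact ⟨iXY, iX2Y2, eXY, eX2Y2⟩

end PairMoments

section ProdIndep

lemma iIndepFun_integral_finset_prod {ι' : Type*} {Ω' : Type*} [MeasurableSpace Ω']
    {μ' : Measure Ω'} [IsProbabilityMeasure μ'] {W : ι' → Ω' → ℝ}
    (h : @iIndepFun _ _ _ _ (fun _ => (inferInstance : MeasurableSpace ℝ)) W μ')
    (hm : ∀ i, Measurable (W i)) (hint : ∀ i, Integrable (W i) μ') (F : Finset ι') :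
    Integrable (fun ω => ∏ k ∈ F, W k ω) μ' ∧
      ∫ ω, ∏ k ∈ F, W k ω ∂μ' = ∏ k ∈ F, ∫ ω, W k ω ∂μ' := by
  classical
  induction F using Finset.induction with
  | empty => simp
  | @insert i F hiF ih =>
    have hPfun : (∏ j ∈ F, W j) = fun ω => ∏ j ∈ F, W j ω := by
      funext ω; exact Finset.prod_apply ω F W
    have hP' : Integrable (∏ j ∈ F, W j) μ' := by rw [hPfun]; exact ih.1
    have hsub : IndepFun (∏ j ∈ F, W j) (W i) μ' :=
      h.indepFun_finset_prod_of_notMem hm hiF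
    have hmul : Integrable ((∏ j ∈ F, W j) * W i) μ' := hsub.integrable_mul hP' (hint i)
    have heq : (fun ω => ∏ k ∈ insert i F, W k ω) = ((∏ j ∈ F, W j) * W i) := by
      funext ω
      rw [Finset.prod_insert hiF, Pi.mul_apply, hPfun]
      ring
    constructor
    · rw [heq]; exact hmul
    · rw [heq, hsub.integral_mul_eq_mul_integral hP'.aestronglyMeasurable (hint i).aestronglyMeasurable, Finset.prod_insert hiF,
        hPfun, ih.2]
      ring

lemma indicator_01_integral {Ω' : Type*} [MeasurableSpace Ω'] {μ' : Measure Ω'}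
    [IsFiniteMeasure μ'] {h : Ω' → ℝ}
    (hm : Measurable h) (h01 : ∀ ω, h ω = 0 ∨ h ω = 1) {p : ℝ} (hp0 : 0 ≤ p)
    (hP : μ' {ω | h ω = 1} = ENNReal.ofReal p) :
    Integrable h μ' ∧ ∫ ω, h ω ∂μ' = p := by
  have hA : MeasurableSet {ω | h ω = 1} := hm (measurableSet_singleton 1)
  have hind : h = Set.indicator {ω | h ω = 1} (fun _ => (1:ℝ)) := by
    funext ω
    rcases h01 ω with h0 | h1
    · simp [Set.indicator_apply, Set.mem_setOf_eq, h0]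
    · simp [Set.indicator_apply, Set.mem_setOf_eq, h1]
  constructor
  · rw [hind]; exact (integrable_const 1).indicator hA
  · rw [hind, integral_indicator_const (1:ℝ) hA, measureReal_def, hP, ENNReal.toReal_ofReal hp0, smul_eq_mul,
      mul_one]

/-- The coordinate-wise transformation used to turn the mixed family into a real-valued one. -/
def mixedPhi {α β γ : Type*} (g : ℝ × ℝ → ℝ) : ∀ x : α ⊕ β ⊕ γ, mixedCod α β γ x → ℝ
  | Sum.inl _ => id
  | Sum.inr (Sum.inl _) => id
  | Sum.inr (Sum.inr _) => g

lemma mixedPhi_measurable {α β γ : Type*} {g : ℝ × ℝ → ℝ} (hg : Measurable g) :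
    ∀ x : α ⊕ β ⊕ γ, Measurable[mixedMS x] (mixedPhi (α := α) (β := β) (γ := γ) g x)
  | Sum.inl _ => measurable_id
  | Sum.inr (Sum.inl _) => measurable_id
  | Sum.inr (Sum.inr _) => hg

lemma mixedPhi_comp {Ω : Type*} {α β γ : Type*} (f : α → Ω → ℝ) (g' : β → Ω → ℝ)
    (h : γ → Ω → ℝ × ℝ) (g : ℝ × ℝ → ℝ) :
    (fun k => mixedPhi (α := α) (β := β) (γ := γ) g k ∘ mixedFam f g' h k)
      = Sum.elim f (Sum.elim g' (fun s ω => g (h s ω))) := by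
  funext k
  cases k with
  | inl s => rfl
  | inr k => cases k with
    | inl s => rfl
    | inr s => rfl

end ProdIndep

lemma final_algebra (A c x y d : ℝ) (hx : 0 < x) (hd : 0 < d) (hCS : x ^ 2 ≤ d * y) :
    ((x * c) ^ 2 + ((A + 2 * c ^ 2) * x - c ^ 2 * y)) / x ^ 2 - (x * c / x) ^ 2
      ≤ A / (d * (x / d)) + c ^ 2 / d * (2 / (x / d) - 1) := by
  have hx' : x ≠ 0 := ne_of_gt hx
  have hd' : d ≠ 0 := ne_of_gt hd
  have h1 : d * (x / d) = x := by field_simp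
  have h2 : x * c / x = c := by field_simp
  rw [h1, h2]
  have hkey : c ^ 2 * x ^ 2 ≤ c ^ 2 * (d * y) := mul_le_mul_of_nonneg_left hCS (sq_nonneg c)
  have heq : A / x + c ^ 2 / d * (2 / (x / d) - 1)
      - (((x * c) ^ 2 + ((A + 2 * c ^ 2) * x - c ^ 2 * y)) / x ^ 2 - c ^ 2)
      = (c ^ 2 * (d * y) - c ^ 2 * x ^ 2) / (d * x ^ 2) := by
    field_simp
    ring
  have hnn : (0:ℝ) ≤ (c ^ 2 * (d * y) - c ^ 2 * x ^ 2) / (d * x ^ 2) :=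
    div_nonneg (sub_nonneg.mpr hkey) (by positivity)
  linarith


/-- Proposition 2 (upper bound on the variance of the bias-corrected off-diagonal Gram entry). -/
theorem bias_corrected_gram_offdiag_var_upper_bound
    {Ω : Type*} [MeasurableSpace Ω] (μ : Measure Ω) [IsProbabilityMeasure μ]
    (Kii Kjj Kij : ℝ) (hKii : 0 < Kii) (hKjj : 0 < Kjj) (hKpsd : Kij ^ 2 ≤ Kii * Kjj)
    (D : ℕ) (hD : 1 ≤ D)
    (pi pj : Fin D → ℝ)
    (hpi : ∀ s, 0 < pi s ∧ pi s ≤ 1) (hpj : ∀ s, 0 < pj s ∧ pj s ≤ 1)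
    (Yt : Fin D → Ω → ℝ × ℝ) (hYt : ∀ s, Measurable (Yt s))
    (hYtlaw : ∀ s, IsCenteredGaussianPair (μ.map (Yt s)) Kii Kjj Kij)
    (Hi Hj : Fin D → Ω → ℝ) (hHi : ∀ s, Measurable (Hi s)) (hHj : ∀ s, Measurable (Hj s))
    (hHi01 : ∀ s ω, Hi s ω = 0 ∨ Hi s ω = 1) (hHj01 : ∀ s ω, Hj s ω = 0 ∨ Hj s ω = 1)
    (hHiP : ∀ s, μ {ω | Hi s ω = 1} = ENNReal.ofReal (pi s))
    (hHjP : ∀ s, μ {ω | Hj s ω = 1} = ENNReal.ofReal (pj s))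
    (hindep : @iIndepFun _ _ _ _ mixedMS (mixedFam Hi Hj Yt) μ)
    (Yi Yj : Fin D → Ω → ℝ)
    (hYi : Yi = fun s ω => Hi s ω * (Yt s ω).1) (hYj : Yj = fun s ω => Hj s ω * (Yt s ω).2)
    (G Gtilde : Ω → ℝ)
    (hG : G = fun ω => ∑ s, Yi s ω * Yj s ω)
    (hGt : Gtilde = fun ω => G ω / ∑ s, pi s * pj s)
    (pbar : ℝ) (hpbar : pbar = (∑ s, pi s * pj s) / D) :
    ∫ ω, Gtilde ω ^ 2 ∂μ - (∫ ω, Gtilde ω ∂μ) ^ 2 ≤ Kii * Kjj / (D * pbar) + Kij ^ 2 / D * (2 / pbar - 1) := by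
  classical
  have hD0 : (0:ℝ) < (D:ℝ) := by exact_mod_cast Nat.lt_of_lt_of_le Nat.zero_lt_one hD
  have hmom := fun s => (hYtlaw s).moments (le_of_lt hKii) (le_of_lt hKjj) hKpsd
  have hmg1 : Measurable (fun p : ℝ × ℝ => p.1 * p.2) := measurable_fst.mul measurable_snd
  have hmg2 : Measurable (fun p : ℝ × ℝ => (p.1 * p.2) ^ 2) := hmg1.pow_const 2
  -- the two real-valued independent families
  have hW1 : @iIndepFun _ _ _ _ (fun _ : Fin D ⊕ Fin D ⊕ Fin D => (inferInstance : MeasurableSpace ℝ))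
      (Sum.elim Hi (Sum.elim Hj (fun s ω => (Yt s ω).1 * (Yt s ω).2))) μ := by
    have h' : @iIndepFun _ _ _ _ (fun _ : Fin D ⊕ Fin D ⊕ Fin D => (inferInstance : MeasurableSpace ℝ))
        (fun k => mixedPhi (fun p : ℝ × ℝ => p.1 * p.2) k ∘ mixedFam Hi Hj Yt k) μ :=
      hindep.comp _ (mixedPhi_measurable hmg1)
    rw [mixedPhi_comp] at h'
    exact h'
  have hW2 : @iIndepFun _ _ _ _ (fun _ : Fin D ⊕ Fin D ⊕ Fin D => (inferInstance : MeasurableSpace ℝ))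
      (Sum.elim Hi (Sum.elim Hj (fun s ω => ((Yt s ω).1 * (Yt s ω).2) ^ 2))) μ := by
    have h' : @iIndepFun _ _ _ _ (fun _ : Fin D ⊕ Fin D ⊕ Fin D => (inferInstance : MeasurableSpace ℝ))
        (fun k => mixedPhi (fun p : ℝ × ℝ => (p.1 * p.2) ^ 2) k ∘ mixedFam Hi Hj Yt k) μ :=
      hindep.comp _ (mixedPhi_measurable hmg2)
    rw [mixedPhi_comp] at h'
    exact h'
  -- measurability of the components
  have hmW1 : ∀ k, Measurable ((Sum.elim Hi (Sum.elim Hj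
      (fun s ω => (Yt s ω).1 * (Yt s ω).2))) k) := by
    rintro (s | s | s)
    · exact hHi s
    · exact hHj s
    · exact hmg1.comp (hYt s)
  have hmW2 : ∀ k, Measurable ((Sum.elim Hi (Sum.elim Hj
      (fun s ω => ((Yt s ω).1 * (Yt s ω).2) ^ 2))) k) := by
    rintro (s | s | s)
    · exact hHi s
    · exact hHj s
    · exact hmg2.comp (hYt s)
  -- integrability and integrals of the components
  have hHiI := fun s => indicator_01_integral (hHi s) (hHi01 s) (le_of_lt (hpi s).1) (hHiP s)
  have hHjI := fun s => indicator_01_integral (hHj s) (hHj01 s) (le_of_lt (hpj s).1) (hHjP s)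
  have hg1I : ∀ s, Integrable (fun ω => (Yt s ω).1 * (Yt s ω).2) μ := fun s =>
    (integrable_map_measure hmg1.aestronglyMeasurable (hYt s).aemeasurable).mp (hmom s).1
  have hg2I : ∀ s, Integrable (fun ω => ((Yt s ω).1 * (Yt s ω).2) ^ 2) μ := fun s =>
    (integrable_map_measure hmg2.aestronglyMeasurable (hYt s).aemeasurable).mp (hmom s).2.1
  have hg1V : ∀ s, ∫ ω, (Yt s ω).1 * (Yt s ω).2 ∂μ = Kij := by
    intro s
    have h := (hmom s).2.2.1
    rw [integral_map (hYt s).aemeasurable hmg1.aestronglyMeasurable] at h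
    exact h
  have hg2V : ∀ s, ∫ ω, ((Yt s ω).1 * (Yt s ω).2) ^ 2 ∂μ = Kii * Kjj + 2 * Kij ^ 2 := by
    intro s
    have h := (hmom s).2.2.2
    rw [integral_map (hYt s).aemeasurable hmg2.aestronglyMeasurable] at h
    exact h
  have hIW1 : ∀ k, Integrable ((Sum.elim Hi (Sum.elim Hj
      (fun s ω => (Yt s ω).1 * (Yt s ω).2))) k) μ := by
    rintro (s | s | s)
    · exact (hHiI s).1
    · exact (hHjI s).1
    · exact hg1I s
  have hIW2 : ∀ k, Integrable ((Sum.elim Hi (Sum.elim Hj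
      (fun s ω => ((Yt s ω).1 * (Yt s ω).2) ^ 2))) k) μ := by
    rintro (s | s | s)
    · exact (hHiI s).1
    · exact (hHjI s).1
    · exact hg2I s
  have hprod1 := iIndepFun_integral_finset_prod hW1 hmW1 hIW1
  have hprod2 := iIndepFun_integral_finset_prod hW2 hmW2 hIW2
  -- single-term expectation
  have key1 : ∀ s, Integrable (fun ω => Yi s ω * Yj s ω) μ ∧
      ∫ ω, Yi s ω * Yj s ω ∂μ = pi s * pj s * Kij := by
    intro s
    have h3 := hprod1 ({Sum.inl s, Sum.inr (Sum.inl s), Sum.inr (Sum.inr s)} :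
      Finset (Fin D ⊕ Fin D ⊕ Fin D))
    have hfe : (fun ω => Yi s ω * Yj s ω) = fun ω => ∏ k ∈ ({Sum.inl s, Sum.inr (Sum.inl s),
        Sum.inr (Sum.inr s)} : Finset (Fin D ⊕ Fin D ⊕ Fin D)),
        (Sum.elim Hi (Sum.elim Hj (fun s ω => (Yt s ω).1 * (Yt s ω).2))) k ω := by
      funext ω
      rw [Finset.prod_insert (by simp), Finset.prod_insert (by simp), Finset.prod_singleton]
      simp only [Sum.elim_inl, Sum.elim_inr, hYi, hYj]
      ring
    refine ⟨by rw [hfe]; exact h3.1, ?_⟩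
    rw [hfe, h3.2, Finset.prod_insert (by simp), Finset.prod_insert (by simp),
      Finset.prod_singleton]
    simp only [Sum.elim_inl, Sum.elim_inr]
    rw [(hHiI s).2, (hHjI s).2, hg1V s]
    ring
  -- diagonal second-moment
  have key2 : ∀ s, Integrable (fun ω => (Yi s ω * Yj s ω) * (Yi s ω * Yj s ω)) μ ∧
      ∫ ω, (Yi s ω * Yj s ω) * (Yi s ω * Yj s ω) ∂μ
        = pi s * pj s * (Kii * Kjj + 2 * Kij ^ 2) := by
    intro s
    have h3 := hprod2 ({Sum.inl s, Sum.inr (Sum.inl s), Sum.inr (Sum.inr s)} :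
      Finset (Fin D ⊕ Fin D ⊕ Fin D))
    have hfe : (fun ω => (Yi s ω * Yj s ω) * (Yi s ω * Yj s ω)) = fun ω =>
        ∏ k ∈ ({Sum.inl s, Sum.inr (Sum.inl s), Sum.inr (Sum.inr s)} :
          Finset (Fin D ⊕ Fin D ⊕ Fin D)),
        (Sum.elim Hi (Sum.elim Hj (fun s ω => ((Yt s ω).1 * (Yt s ω).2) ^ 2))) k ω := by
      funext ω
      rw [Finset.prod_insert (by simp), Finset.prod_insert (by simp), Finset.prod_singleton]
      simp only [Sum.elim_inl, Sum.elim_inr, hYi, hYj]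
      rcases hHi01 s ω with h0 | h0 <;> rcases hHj01 s ω with h1 | h1 <;> rw [h0, h1] <;> ring
    refine ⟨by rw [hfe]; exact h3.1, ?_⟩
    rw [hfe, h3.2, Finset.prod_insert (by simp), Finset.prod_insert (by simp),
      Finset.prod_singleton]
    simp only [Sum.elim_inl, Sum.elim_inr]
    rw [(hHiI s).2, (hHjI s).2, hg2V s]
    ring
  -- off-diagonal
  have key3 : ∀ s t, s ≠ t → Integrable (fun ω => (Yi s ω * Yj s ω) * (Yi t ω * Yj t ω)) μ ∧
      ∫ ω, (Yi s ω * Yj s ω) * (Yi t ω * Yj t ω) ∂μ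
        = pi s * pj s * Kij * (pi t * pj t * Kij) := by
    intro s t hst
    have h6 := hprod1 ({Sum.inl s, Sum.inl t, Sum.inr (Sum.inl s), Sum.inr (Sum.inl t),
      Sum.inr (Sum.inr s), Sum.inr (Sum.inr t)} : Finset (Fin D ⊕ Fin D ⊕ Fin D))
    have hfe : (fun ω => (Yi s ω * Yj s ω) * (Yi t ω * Yj t ω)) = fun ω =>
        ∏ k ∈ ({Sum.inl s, Sum.inl t, Sum.inr (Sum.inl s), Sum.inr (Sum.inl t),
          Sum.inr (Sum.inr s), Sum.inr (Sum.inr t)} : Finset (Fin D ⊕ Fin D ⊕ Fin D)),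
        (Sum.elim Hi (Sum.elim Hj (fun s ω => (Yt s ω).1 * (Yt s ω).2))) k ω := by
      funext ω
      rw [Finset.prod_insert (by simp [hst]), Finset.prod_insert (by simp [hst]),
        Finset.prod_insert (by simp [hst]), Finset.prod_insert (by simp [hst]),
        Finset.prod_insert (by simp [hst]), Finset.prod_singleton]
      simp only [Sum.elim_inl, Sum.elim_inr, hYi, hYj]
      ring
    refine ⟨by rw [hfe]; exact h6.1, ?_⟩
    rw [hfe, h6.2, Finset.prod_insert (by simp [hst]), Finset.prod_insert (by simp [hst]),
      Finset.prod_insert (by simp [hst]), Finset.prod_insert (by simp [hst]),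
      Finset.prod_insert (by simp [hst]), Finset.prod_singleton]
    simp only [Sum.elim_inl, Sum.elim_inr]
    rw [(hHiI s).2, (hHjI s).2, hg1V s, (hHiI t).2, (hHjI t).2, hg1V t]
    ring
  -- combined second-moment formula
  have keyTT : ∀ s t, Integrable (fun ω => (Yi s ω * Yj s ω) * (Yi t ω * Yj t ω)) μ ∧
      ∫ ω, (Yi s ω * Yj s ω) * (Yi t ω * Yj t ω) ∂μ
        = pi s * pj s * Kij * (pi t * pj t * Kij)
          + (if s = t then pi s * pj s * (Kii * Kjj + 2 * Kij ^ 2)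
              - (pi s * pj s * Kij) ^ 2 else 0) := by
    intro s t
    by_cases hst : s = t
    · subst hst
      refine ⟨(key2 s).1, ?_⟩
      rw [(key2 s).2, if_pos rfl]
      ring
    · refine ⟨(key3 s t hst).1, ?_⟩
      rw [(key3 s t hst).2, if_neg hst, add_zero]
  -- first moment of G
  have hEG : ∫ ω, G ω ∂μ = (∑ s, pi s * pj s) * Kij := by
    simp only [hG]
    rw [integral_finset_sum univ (fun s _ => (key1 s).1),
      Finset.sum_congr rfl (fun s _ => (key1 s).2), ← Finset.sum_mul]
  -- second moment of G
  have hEG2 : ∫ ω, G ω ^ 2 ∂μ = ((∑ s, pi s * pj s) * Kij) ^ 2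
      + ((Kii * Kjj + 2 * Kij ^ 2) * (∑ s, pi s * pj s)
        - Kij ^ 2 * ∑ s, (pi s * pj s) ^ 2) := by
    simp only [hG]
    have hfe : (fun ω => (∑ s, Yi s ω * Yj s ω) ^ 2)
        = fun ω => ∑ s, ∑ t, (Yi s ω * Yj s ω) * (Yi t ω * Yj t ω) := by
      funext ω
      rw [sq, Finset.sum_mul_sum]
    rw [hfe, integral_finset_sum univ
        (fun s _ => integrable_finset_sum univ (fun t _ => (keyTT s t).1)),
      Finset.sum_congr rfl
        (fun s _ => integral_finset_sum univ (fun t _ => (keyTT s t).1)),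
      Finset.sum_congr rfl
        (fun s _ => Finset.sum_congr rfl (fun t _ => (keyTT s t).2)),
      Finset.sum_congr rfl (fun s _ => Finset.sum_add_distrib),
      Finset.sum_add_distrib]
    congr 1
    · rw [← Finset.sum_mul_sum, ← Finset.sum_mul, sq]
    · rw [Finset.sum_congr rfl (fun s _ => Finset.sum_ite_eq univ s
        (fun t => pi s * pj s * (Kii * Kjj + 2 * Kij ^ 2) - (pi s * pj s * Kij) ^ 2))]
      simp only [Finset.mem_univ, if_true]
      rw [Finset.sum_congr rfl (fun s _ => show
          pi s * pj s * (Kii * Kjj + 2 * Kij ^ 2) - (pi s * pj s * Kij) ^ 2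
          = (Kii * Kjj + 2 * Kij ^ 2) * (pi s * pj s) - Kij ^ 2 * (pi s * pj s) ^ 2
        from by ring), Finset.sum_sub_distrib, ← Finset.mul_sum, ← Finset.mul_sum]
  -- positivity of the normalizer
  have hPpos : (0:ℝ) < ∑ s, pi s * pj s :=
    Finset.sum_pos (fun s _ => mul_pos (hpi s).1 (hpj s).1)
      ⟨⟨0, by omega⟩, Finset.mem_univ _⟩
  -- Cauchy–Schwarz
  have hCS : (∑ s, pi s * pj s) ^ 2 ≤ (D:ℝ) * ∑ s, (pi s * pj s) ^ 2 := by
    have h := sq_sum_le_card_mul_sum_sq (s := (univ : Finset (Fin D)))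
      (f := fun s => pi s * pj s)
    simpa using h
  -- rewrite the goal
  have e1 : (fun ω => Gtilde ω ^ 2) = fun ω => G ω ^ 2 / (∑ s, pi s * pj s) ^ 2 := by
    funext ω
    rw [hGt]
    rw [div_pow]
  have e2 : (fun ω => Gtilde ω) = fun ω => G ω / (∑ s, pi s * pj s) := by
    funext ω
    rw [hGt]
  calc ∫ ω, Gtilde ω ^ 2 ∂μ - (∫ ω, Gtilde ω ∂μ) ^ 2
      = (∫ ω, G ω ^ 2 ∂μ) / (∑ s, pi s * pj s) ^ 2
        - ((∫ ω, G ω ∂μ) / (∑ s, pi s * pj s)) ^ 2 := by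
        rw [show (∫ ω, Gtilde ω ^ 2 ∂μ) = ∫ ω, G ω ^ 2 / (∑ s, pi s * pj s) ^ 2 ∂μ from by
            rw [e1],
          show (∫ ω, Gtilde ω ∂μ) = ∫ ω, G ω / (∑ s, pi s * pj s) ∂μ from by rw [e2],
          integral_div, integral_div]
    _ ≤ Kii * Kjj / (D * pbar) + Kij ^ 2 / D * (2 / pbar - 1) := by
        rw [hEG, hEG2, hpbar]
        exact final_algebra (Kii * Kjj) Kij (∑ s, pi s * pj s) (∑ s, (pi s * pj s) ^ 2)
          (D:ℝ) hPpos hD0 hCS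
end
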